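/- arXiv:2509.03190 — 2 statements merged into one kernel-verified Lean document; each statement's English description precedes it below -/
import Mathlib

section
/- The graph F₂ admits a frozen 4-coloring, where F₂ is the graph obtained from a 6-cycle v₁...v₆ by adding three pairwise nonadjacent vertices s₁, s₂, s₃ with N(s₁)∩{v₁,...,v₆} = {v₆,v₁,v₂}, N(s₂)∩{v₁,...,v₆} = {v₂,v₃,v₄}, N(s₃)∩{v₁,...,v₆} = {v₄,v₅,v₆}, so that s₁, s₂, s₃ form an independent set, each adjacent to exactly three consecutive cycle vertices, alternating around the cycle; moreover χ(F₂) = 3, and F₂ has a proper 4-coloring in which every vertex sees all 4 colors in its closed neighborhood. -/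
open SimpleGraph

/-- A proper coloring of `G` with colors in `Fin ℓ`. -/
def IsProperColoring {V : Type*} (G : SimpleGraph V) (ℓ : ℕ) (f : V → Fin ℓ) : Prop :=
  ∀ ⦃a b : V⦄, G.Adj a b → f a ≠ f b

/-- A walk in the reconfiguration graph `R_ℓ(G)`: a sequence `c 0, c 1, …, c m` of proper
`ℓ`-colorings of `G` in which consecutive colorings differ on at most one vertex. -/
def IsRecolorSeq {V : Type*} (G : SimpleGraph V) (ℓ m : ℕ) (c : ℕ → V → Fin ℓ) : Prop :=
  (∀ i ≤ m, IsProperColoring G ℓ (c i)) ∧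
    ∀ i < m, ∀ a b : V, a ≠ b → c i a ≠ c (i + 1) a → c i b = c (i + 1) b

/-- The number of times the vertex `a` is recolored along the sequence `c 0, …, c m`. -/
def recolorCount {V : Type*} {ℓ : ℕ} (m : ℕ) (c : ℕ → V → Fin ℓ) (a : V) : ℕ :=
  ((Finset.range m).filter fun i => c i a ≠ c (i + 1) a).card

/-- The cycle `Cₙ` on `Fin n` (for `n ≥ 3`). -/
def cyc (n : ℕ) [NeZero n] : SimpleGraph (Fin n) := SimpleGraph.fromRel fun a b => a + 1 = b

/-- The graph `P₂ + P₃`, the disjoint union of an edge and a path on three vertices. -/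
def p2p3 : SimpleGraph (Fin 5) := SimpleGraph.fromRel fun a b =>
  (a = 0 ∧ b = 1) ∨ (a = 2 ∧ b = 3) ∨ (a = 3 ∧ b = 4)

/-- The edges of the graph `F₂`: the 6-cycle `v₁…v₆` is `0,…,5`, and `s₁, s₂, s₃` are
`6, 7, 8`, where `s₁` is adjacent to `v₆,v₁,v₂`, `s₂` to `v₂,v₃,v₄`, `s₃` to `v₄,v₅,v₆`. -/
def f2edges : List (Fin 9 × Fin 9) :=
  [(0, 1), (1, 2), (2, 3), (3, 4), (4, 5), (5, 0),
   (6, 5), (6, 0), (6, 1), (7, 1), (7, 2), (7, 3), (8, 3), (8, 4), (8, 5)]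

/-- The graph `F₂`. -/
def F2 : SimpleGraph (Fin 9) := SimpleGraph.fromRel fun a b => (a, b) ∈ f2edges

instance : DecidableRel F2.Adj := fun a b =>
  decidable_of_iff _ (SimpleGraph.fromRel_adj _ a b).symm

/-- `χ(F₂) = 3` and `F₂` admits a frozen 4-coloring: a proper 4-coloring in
which all 4 colors appear in the closed neighborhood of every vertex. -/
theorem stmt15 :
    F2.chromaticNumber = (3 : ℕ∞) ∧
    ∃ φ : Fin 9 → Fin 4, IsProperColoring F2 4 φ ∧
      ∀ x : Fin 9, ∀ col : Fin 4, ∃ y, (y = x ∨ F2.Adj x y) ∧ φ y = col := by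
  constructor
  · -- chromatic number
    refine le_antisymm ?_ ?_
    · have h : ∀ a b : Fin 9, F2.Adj a b →
          (![0,1,0,1,0,1,2,2,2] : Fin 9 → Fin 3) a ≠ ![0,1,0,1,0,1,2,2,2] b := by decide
      exact Colorable.chromaticNumber_le ⟨Coloring.mk _ fun {a b} hab => h a b hab⟩
    · have hcl : F2.IsClique ({0, 5, 6} : Finset (Fin 9)) := by
        have h : ∀ x ∈ ({0,5,6} : Finset (Fin 9)), ∀ y ∈ ({0,5,6} : Finset (Fin 9)),
            x ≠ y → F2.Adj x y := by decide
        intro x hx y hy hxy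
        exact h x (by simpa using hx) y (by simpa using hy) hxy
      have := hcl.card_le_chromaticNumber
      simpa using this
  · refine ⟨![0,1,2,0,1,2,3,3,3], fun a b hab => ?_, ?_⟩
    · have h : ∀ a b : Fin 9, F2.Adj a b →
          (![0,1,2,0,1,2,3,3,3] : Fin 9 → Fin 4) a ≠ ![0,1,2,0,1,2,3,3,3] b := by decide
      exact h a b hab
    · decide
end

section
/- Let G be a graph in H₅ with |S₁| ≥ 2 and |S₂| ≥ 2. Then χ(G) = |S₁| + |S₂| + 1, and for every ℓ > χ(G), between any two ℓ-colorings of G there is a path in R_ℓ(G) recoloring each vertex at most 6 times. -/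
open SimpleGraph

/-- Adjacency in the 6-cycle on `Fin 6` (indices mod 6). -/
def c6adj (i j : Fin 6) : Prop := i + 1 = j ∨ j + 1 = i

/-- The class `H₅`: six vertices `v 0, …, v 5` inducing a 6-cycle and two disjoint nonempty
cliques `S₁, S₂`, complete to each other, with `S₁` complete to `{v₁,v₂,v₃,v₆}` and `S₂`
complete to `{v₃,v₄,v₅,v₆}`; no other edges. (Here `vᵢ` of the paper is `v (i-1)`.) -/
structure H5Data {V : Type*} (G : SimpleGraph V) where
  v : Fin 6 → V
  S1 : Finset V
  S2 : Finset V
  inj : Function.Injective v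
  notin : ∀ i, v i ∉ S1 ∧ v i ∉ S2
  d12 : Disjoint S1 S2
  ne1 : S1.Nonempty
  ne2 : S2.Nonempty
  cover : ∀ x : V, (x ∈ S1 ∨ x ∈ S2) ∨ ∃ i, x = v i
  adj_iff : ∀ x y : V, G.Adj x y ↔ x ≠ y ∧
    ((∃ i j : Fin 6, x = v i ∧ y = v j ∧ c6adj i j) ∨
     (x ∈ S1 ∧ y ∈ S1) ∨ (x ∈ S2 ∧ y ∈ S2) ∨
     (x ∈ S1 ∧ y ∈ S2) ∨ (x ∈ S2 ∧ y ∈ S1) ∨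
     (x ∈ S1 ∧ (y = v 0 ∨ y = v 1 ∨ y = v 2 ∨ y = v 5)) ∨
     (y ∈ S1 ∧ (x = v 0 ∨ x = v 1 ∨ x = v 2 ∨ x = v 5)) ∨
     (x ∈ S2 ∧ (y = v 2 ∨ y = v 3 ∨ y = v 4 ∨ y = v 5)) ∨
     (y ∈ S2 ∧ (x = v 2 ∨ x = v 3 ∨ x = v 4 ∨ x = v 5)))

/-!
The clique `Q = S₁ ∪ S₂ ∪ {v₃}` has `|S₁| + |S₂| + 1` vertices, and `G` retracts onto it: for
`a₁ ≠ a₂` in `S₁` and `b₁ ≠ b₂` in `S₂`, the map fixing `Q` and sending `v₁, v₂, v₄, v₅, v₆` to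
`b₁, b₂, a₁, a₂, v₃` is a homomorphism onto the complete graph on `Q`. Hence `χ(G) = |Q|`, and a
recoloring sequence of that complete graph pulls back to `G`, each vertex being recolored as often
as its image. With a spare color, the complete graph can be recolored between any two colorings
recoloring each vertex at most twice. It remains to reach the pulled-back coloring `φ ∘ r` from
any coloring `φ`, recoloring each vertex at most twice: recolor the edges `v₄v₅` and `v₂v₁`
(through the spare color if the two vertices want each other's colors), then `v₆`.
In total each vertex is recolored at most `2 + 2 + 2` times.
-/

open Function

section Reconfiguration

variable {V : Type*} {G : SimpleGraph V} {ℓ : ℕ}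

theorem IsProperColoring.update [DecidableEq V] {c : V → Fin ℓ} (hc : IsProperColoring G ℓ c)
    {x : V} {γ : Fin ℓ} (hγ : ∀ z, G.Adj x z → c z ≠ γ) :
    IsProperColoring G ℓ (update c x γ) := by
  intro a b hab
  rcases eq_or_ne a x with rfl | ha
  · rw [update_self, update_of_ne hab.ne']
    exact (hγ b hab).symm
  rcases eq_or_ne b x with rfl | hb
  · rw [update_of_ne ha, update_self]
    exact hγ a hab.symm
  rw [update_of_ne ha, update_of_ne hb]
  exact hc hab

theorem IsProperColoring.comp {W : Type*} {H : SimpleGraph W} {c : W → Fin ℓ}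
    (hc : IsProperColoring H ℓ c) (f : G →g H) : IsProperColoring G ℓ (c ∘ f) :=
  fun _ _ hab => hc (f.map_adj hab)

theorem recolorCount_add (m n : ℕ) (cs : ℕ → V → Fin ℓ) (a : V) :
    recolorCount (m + n) cs a = recolorCount m cs a + recolorCount n (fun i => cs (m + i)) a := by
  simp only [recolorCount, Finset.card_filter, Finset.sum_range_add, add_assoc]

theorem recolorCount_succ (m : ℕ) (cs : ℕ → V → Fin ℓ) (a : V) :
    recolorCount (m + 1) cs a = recolorCount m cs a + if cs m a ≠ cs (m + 1) a then 1 else 0 := by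
  rw [recolorCount_add]
  congr 1
  simp only [recolorCount, Finset.range_one, Finset.filter_singleton, add_zero]
  split_ifs <;> simp

theorem recolorCount_congr {m : ℕ} {cs cs' : ℕ → V → Fin ℓ} (h : ∀ i ≤ m, cs i = cs' i)
    (a : V) : recolorCount m cs a = recolorCount m cs' a := by
  unfold recolorCount
  congr 1
  refine Finset.filter_congr fun i hi => ?_
  rw [Finset.mem_range] at hi
  rw [h i hi.le, h (i + 1) hi]

def Recolors (G : SimpleGraph V) (ℓ : ℕ) (c d : V → Fin ℓ) (κ : V → ℕ) : Prop :=
  ∃ m cs, IsRecolorSeq G ℓ m cs ∧ cs 0 = c ∧ cs m = d ∧ ∀ a, recolorCount m cs a ≤ κ a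

namespace Recolors

variable {c d e : V → Fin ℓ} {κ κ₁ κ₂ : V → ℕ}

theorem proper_right (h : Recolors G ℓ c d κ) : IsProperColoring G ℓ d := by
  obtain ⟨m, cs, ⟨hp, -⟩, -, rfl, -⟩ := h
  exact hp m le_rfl

theorem mono (h : Recolors G ℓ c d κ₁) (hκ : κ₁ ≤ κ₂) : Recolors G ℓ c d κ₂ := by
  obtain ⟨m, cs, hseq, h0, hm, hcount⟩ := h
  exact ⟨m, cs, hseq, h0, hm, fun a => (hcount a).trans (hκ a)⟩

theorem refl (hc : IsProperColoring G ℓ c) : Recolors G ℓ c c 0 :=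
  ⟨0, fun _ => c, ⟨fun _ _ => hc, fun _ hi => absurd hi (Nat.not_lt_zero _)⟩, rfl, rfl,
    fun _ => by simp [recolorCount]⟩

theorem single [DecidableEq V] (hc : IsProperColoring G ℓ c) {x : V} {γ : Fin ℓ}
    (hγ : ∀ z, G.Adj x z → c z ≠ γ) :
    Recolors G ℓ c (update c x γ) fun a => if a = x then 1 else 0 := by
  refine ⟨1, fun i => if i = 0 then c else update c x γ, ⟨?_, ?_⟩, rfl, rfl, fun a => ?_⟩
  · intro i _
    dsimp only
    split_ifs
    exacts [hc, hc.update hγ]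
  · intro i hi a b hab hne
    obtain rfl : i = 0 := by omega
    change c a ≠ update c x γ a at hne
    change c b = update c x γ b
    rcases eq_or_ne a x with rfl | hax
    · rw [update_of_ne hab.symm]
    · exact absurd (update_of_ne hax γ c).symm hne
  · rw [recolorCount_succ]
    change recolorCount 0 _ a + (if c a ≠ update c x γ a then 1 else 0) ≤ _
    rcases eq_or_ne a x with rfl | hax
    · simp only [recolorCount, Finset.range_zero, Finset.filter_empty, Finset.card_empty,
        update_self]
      split_ifs <;> omega
    · simp [recolorCount, hax]

theorem trans (h₁ : Recolors G ℓ c d κ₁) (h₂ : Recolors G ℓ d e κ₂) :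
    Recolors G ℓ c e (κ₁ + κ₂) := by
  obtain ⟨m₁, cs₁, ⟨p₁, q₁⟩, rfl, rfl, g₁⟩ := h₁
  obtain ⟨m₂, cs₂, ⟨p₂, q₂⟩, e₂, rfl, g₂⟩ := h₂
  let cs : ℕ → V → Fin ℓ := fun i => if i ≤ m₁ then cs₁ i else cs₂ (i - m₁)
  have hcs₁ : ∀ i ≤ m₁, cs i = cs₁ i := fun i hi => if_pos hi
  have hcs₂ : ∀ i, cs (m₁ + i) = cs₂ i := by
    intro i
    rcases Nat.eq_zero_or_pos i with rfl | hi
    · simp [cs, e₂]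
    · simp [cs, hi.ne']
  refine ⟨m₁ + m₂, cs, ⟨fun i hi => ?_, fun i hi => ?_⟩, hcs₁ 0 (Nat.zero_le _), hcs₂ m₂,
    fun a => ?_⟩
  · rcases le_or_gt i m₁ with hle | hlt
    · exact hcs₁ i hle ▸ p₁ i hle
    · obtain ⟨j, rfl⟩ := Nat.exists_eq_add_of_le hlt.le
      exact hcs₂ j ▸ p₂ j (by omega)
  · rcases lt_or_ge i m₁ with hlt | hle
    · rw [hcs₁ i hlt.le, hcs₁ (i + 1) hlt]
      exact q₁ i hlt
    · obtain ⟨j, rfl⟩ := Nat.exists_eq_add_of_le hle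
      rw [add_assoc, hcs₂, hcs₂]
      exact q₂ j (by omega)
  · rw [recolorCount_add, recolorCount_congr hcs₁, funext hcs₂]
    exact add_le_add (g₁ a) (g₂ a)

theorem symm (h : Recolors G ℓ c d κ) : Recolors G ℓ d c κ := by
  obtain ⟨m, cs, ⟨p, q⟩, rfl, rfl, g⟩ := h
  refine ⟨m, fun i => cs (m - i), ⟨fun i _ => p _ (Nat.sub_le m i), fun i hi a b hab hne => ?_⟩,
    by simp, by simp, fun a => (le_of_eq ?_).trans (g a)⟩
  · have hi' : m - i = m - (i + 1) + 1 := by omega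
    simp only [hi'] at hne ⊢
    exact (q _ (by omega) a b hab hne.symm).symm
  · unfold recolorCount
    refine Finset.card_bij' (fun i _ => m - 1 - i) (fun i _ => m - 1 - i) ?_ ?_ ?_ ?_ <;>
      simp only [Finset.mem_filter, Finset.mem_range]
    · rintro i ⟨hi, hne⟩
      refine ⟨by omega, fun he => hne ?_⟩
      rw [show m - i = m - 1 - i + 1 by omega, show m - (i + 1) = m - 1 - i by omega, he]
    · rintro i ⟨hi, hne⟩
      refine ⟨by omega, fun he => hne ?_⟩
      rw [show m - (m - 1 - i) = i + 1 by omega, show m - (m - 1 - i + 1) = i by omega] at he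
      exact he.symm
    · rintro i ⟨hi, -⟩; omega
    · rintro i ⟨hi, -⟩; omega

theorem induction [DecidableEq V] {motive : (V → Fin ℓ) → (V → Fin ℓ) → (V → ℕ) → Prop}
    (refl : ∀ c, IsProperColoring G ℓ c → motive c c 0)
    (step : ∀ c x γ, IsProperColoring G ℓ c → IsProperColoring G ℓ (update c x γ) →
      motive c (update c x γ) fun a => if a = x then 1 else 0)
    (trans : ∀ {c d e κ₁ κ₂}, motive c d κ₁ → motive d e κ₂ → motive c e (κ₁ + κ₂))
    (mono : ∀ {c d κ₁ κ₂}, motive c d κ₁ → κ₁ ≤ κ₂ → motive c d κ₂)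
    {c d : V → Fin ℓ} {κ : V → ℕ} (h : Recolors G ℓ c d κ) : motive c d κ := by
  obtain ⟨m, cs, ⟨p, q⟩, rfl, rfl, g⟩ := h
  suffices ∀ n ≤ m, motive (cs 0) (cs n) fun a => recolorCount n cs a from
    mono (this m le_rfl) g
  intro n hn
  induction n with
  | zero => exact mono (refl _ (p 0 hn)) fun _ => Nat.zero_le _
  | succ n ih =>
    have hstep : ∀ a, recolorCount n cs a ≤ recolorCount (n + 1) cs a := fun a => by
      rw [recolorCount_succ]; exact Nat.le_add_right _ _
    by_cases hsame : cs n = cs (n + 1)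
    · exact hsame ▸ mono (ih (by omega)) hstep
    obtain ⟨x, hx⟩ := Function.ne_iff.1 hsame
    have hupd : cs (n + 1) = update (cs n) x (cs (n + 1) x) := by
      funext b
      rcases eq_or_ne b x with rfl | hbx
      · rw [update_self]
      · rw [update_of_ne hbx, q n (by omega) x b hbx.symm hx]
    have hmove := step _ x (cs (n + 1) x) (p n (by omega)) (hupd ▸ p (n + 1) hn)
    rw [← hupd] at hmove
    refine mono (trans (ih (by omega)) hmove) fun a => ?_
    rw [Pi.add_apply, recolorCount_succ]
    rcases eq_or_ne a x with rfl | hax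
    · simp [hx]
    · simp [hax]

theorem piecewise [DecidableEq V] (hc : IsProperColoring G ℓ c) {s : Finset V} {γ : Fin ℓ}
    (hs : G.IsIndepSet s) (hγ : ∀ x ∈ s, ∀ z, G.Adj x z → c z ≠ γ) :
    Recolors G ℓ c (s.piecewise (fun _ => γ) c) fun a => if a ∈ s then 1 else 0 := by
  induction s using Finset.induction_on with
  | empty =>
    rw [Finset.piecewise_empty]
    exact (Recolors.refl hc).mono fun _ => by simp
  | insert x s hxs ih =>
    have ih := ih (hs.mono (by simp)) fun y hy => hγ y (Finset.mem_insert_of_mem hy)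
    rw [Finset.piecewise_insert]
    refine (ih.trans (Recolors.single ih.proper_right fun z hz => ?_)).mono fun a => ?_
    · have hzs : z ∉ s := fun hzs =>
        hs (by simp) (by simp [hzs]) (by rintro rfl; exact hxs hzs) hz
      rw [Finset.piecewise_eq_of_notMem _ _ _ hzs]
      exact hγ x (Finset.mem_insert_self x s) z hz
    · rcases eq_or_ne a x with rfl | hax <;> simp_all

theorem comap [Fintype V] [DecidableEq V] {W : Type*} [DecidableEq W] {H : SimpleGraph W}
    (f : G →g H) {c d : W → Fin ℓ} {κ : W → ℕ} (h : Recolors H ℓ c d κ) :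
    Recolors G ℓ (c ∘ f) (d ∘ f) (κ ∘ f) := by
  refine Recolors.induction (motive := fun c d κ => Recolors G ℓ (c ∘ f) (d ∘ f) (κ ∘ f))
    (fun c hc => Recolors.refl (hc.comp f)) (fun c w γ hc hc' => ?_)
    (fun h₁ h₂ => h₁.trans h₂) (fun h hκ => h.mono fun x => hκ (f x)) h
  let s := Finset.univ.filter fun x => f x = w
  have hs : G.IsIndepSet s := fun x hx y hy _ hxy => by
    simp only [s, Finset.coe_filter, Finset.mem_univ, true_and, Set.mem_ofPred_eq] at hx hy
    exact H.irrefl (hx ▸ hy ▸ f.map_adj hxy)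
  have hγ : ∀ x ∈ s, ∀ z, G.Adj x z → (c ∘ f) z ≠ γ := fun x hx z hxz => by
    simp only [s, Finset.mem_filter, Finset.mem_univ, true_and] at hx
    have hwz := hx ▸ f.map_adj hxz
    have := hc' hwz
    rw [update_self, update_of_ne hwz.ne'] at this
    exact this.symm
  convert Recolors.piecewise (hc.comp f) hs hγ using 1
  · funext x
    by_cases hx : f x = w <;> simp [s, Finset.piecewise, hx]
  · funext x
    simp [s]

theorem edge [DecidableEq V] (hc : IsProperColoring G ℓ c) {x y : V} (hxy : G.Adj x y)
    {p q f : Fin ℓ} (hpq : p ≠ q) (hfp : f ≠ p) (hfq : f ≠ q)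
    (hx : ∀ z, G.Adj x z → z ≠ y → c z ≠ p ∧ c z ≠ f)
    (hy : ∀ z, G.Adj y z → z ≠ x → c z ≠ q) :
    Recolors G ℓ c (update (update c x p) y q)
      fun a => if a = x ∨ a = y then 2 else 0 := by
  have hne := hxy.ne
  by_cases hcy : c y = p
  · by_cases hcx : c x = q
    · have h₁ := Recolors.single hc (x := x) (γ := f) fun z hz => by
        rcases eq_or_ne z y with rfl | hzy
        exacts [hcy ▸ hfp.symm, (hx z hz hzy).2]
      have h₂ := Recolors.single h₁.proper_right (x := y) (γ := q) fun z hz => by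
        rcases eq_or_ne z x with rfl | hzx
        · rw [update_self]; exact hfq
        · rw [update_of_ne hzx]; exact hy z hz hzx
      have h₃ := Recolors.single h₂.proper_right (x := x) (γ := p) fun z hz => by
        rcases eq_or_ne z y with rfl | hzy
        · rw [update_self]; exact hpq.symm
        · rw [update_of_ne hzy, update_of_ne hz.ne']; exact (hx z hz hzy).1
      have hend : update (update (update c x f) y q) x p =
          update (update c x p) y q := by
        rw [update_comm hne f q c, update_idem, update_comm hne p q c]
      rw [hend] at h₃
      refine ((h₁.trans h₂).trans h₃).mono fun a => ?_
      by_cases hax : a = x <;> by_cases hay : a = y <;> simp_all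
    · have h₁ := Recolors.single hc (x := y) (γ := q) fun z hz => by
        rcases eq_or_ne z x with rfl | hzx
        exacts [hcx, hy z hz hzx]
      have h₂ := Recolors.single h₁.proper_right (x := x) (γ := p) fun z hz => by
        rcases eq_or_ne z y with rfl | hzy
        · rw [update_self]; exact hpq.symm
        · rw [update_of_ne hzy]; exact (hx z hz hzy).1
      rw [← update_comm hne p q c] at h₂
      refine (h₁.trans h₂).mono fun a => ?_
      by_cases hax : a = x <;> by_cases hay : a = y <;> simp_all
  · have h₁ := Recolors.single hc (x := x) (γ := p) fun z hz => by
      rcases eq_or_ne z y with rfl | hzy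
      exacts [hcy, (hx z hz hzy).1]
    have h₂ := Recolors.single h₁.proper_right (x := y) (γ := q) fun z hz => by
      rcases eq_or_ne z x with rfl | hzx
      · rw [update_self]; exact hpq
      · rw [update_of_ne hzx]; exact hy z hz hzx
    refine (h₁.trans h₂).mono fun a => ?_
    by_cases hax : a = x <;> by_cases hay : a = y <;> simp_all

end Recolors

end Reconfiguration

section Complete

variable {W : Type*} {ℓ : ℕ}

theorem isProperColoring_top_iff {c : W → Fin ℓ} :
    IsProperColoring (⊤ : SimpleGraph W) ℓ c ↔ Injective c :=
  ⟨fun h a b hab => by_contra fun hne => h ((top_adj a b).2 hne) hab,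
    fun h _ _ hab => h.ne ((top_adj _ _).1 hab)⟩

variable [Fintype W]

/-- The number of moves `w` still needs on the way to `β`: a vertex whose color is wanted by
another vertex has to step aside to a spare color first. -/
def cliqueCost (β c : W → Fin ℓ) (w : W) : ℕ :=
  if c w = β w then 0 else if c w ∈ Finset.univ.image β then 2 else 1

variable [DecidableEq W]

theorem Recolors.top_cliqueCost (hℓ : Fintype.card W < ℓ) {c β : W → Fin ℓ}
    (hc : Injective c) (hβ : Injective β) : Recolors ⊤ ℓ c β (cliqueCost β c) := by
  induction hn : ∑ w, cliqueCost β c w using Nat.strong_induction_on generalizing c with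
  | _ n ih =>
  by_cases hcβ : c = β
  · subst hcβ
    exact (Recolors.refl (isProperColoring_top_iff.2 hc)).mono fun _ => Nat.zero_le _
  have move : ∀ w γ, (∀ u, u ≠ w → c u ≠ γ) →
      1 + cliqueCost β (update c w γ) w ≤ cliqueCost β c w →
      Recolors ⊤ ℓ c β (cliqueCost β c) := by
    intro w γ hγ hw
    have hcost : ∀ u, u ≠ w → cliqueCost β (update c w γ) u = cliqueCost β c u := fun u hu => by
      simp only [cliqueCost, update_of_ne hu]
    have hmove := Recolors.single (isProperColoring_top_iff.2 hc) (x := w) (γ := γ)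
      fun z hz => hγ z ((top_adj w z).1 hz).symm
    refine (hmove.trans (ih _ ?_ (isProperColoring_top_iff.1 hmove.proper_right) rfl)).mono
      fun u => ?_
    · rw [← hn]
      refine Finset.sum_lt_sum (fun u _ => ?_) ⟨w, Finset.mem_univ w, by omega⟩
      rcases eq_or_ne u w with rfl | hu
      · omega
      · rw [hcost u hu]
    · rcases eq_or_ne u w with rfl | hu
      · simpa using hw
      · simp [hu, hcost u hu]
  by_cases hdirect : ∃ w, c w ≠ β w ∧ ∀ u, c u ≠ β w
  · obtain ⟨w, hw, hfree⟩ := hdirect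
    refine move w (β w) (fun u _ => hfree u) ?_
    simp only [cliqueCost, update_self, if_neg hw]
    split_ifs <;> omega
  -- every wanted color is in use, so `c` and `β` use the same colors and a spare one exists
  push Not at hdirect
  obtain ⟨w, hw⟩ := Function.ne_iff.1 hcβ
  have himage : Finset.univ.image β = Finset.univ.image c := by
    refine Finset.eq_of_subset_of_card_le (fun γ hγ => ?_) ?_
    · obtain ⟨u, -, rfl⟩ := Finset.mem_image.1 hγ
      by_cases hu : c u = β u
      · exact Finset.mem_image.2 ⟨u, Finset.mem_univ u, hu⟩
      · obtain ⟨u', hu'⟩ := hdirect u hu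
        exact Finset.mem_image.2 ⟨u', Finset.mem_univ u', hu'⟩
    · rw [Finset.card_image_of_injective _ hc, Finset.card_image_of_injective _ hβ]
  obtain ⟨f, -, hf⟩ := Finset.exists_mem_notMem_of_card_lt_card
    (s := Finset.univ.image c) (t := Finset.univ)
    (by rw [Finset.card_univ, Fintype.card_fin]; exact Finset.card_image_le.trans_lt hℓ)
  refine move w f (fun u _ hu => hf (hu ▸ Finset.mem_image_of_mem c (Finset.mem_univ u))) ?_
  have hfβ : f ∉ Finset.univ.image β := himage ▸ hf
  have hwβ : c w ∈ Finset.univ.image β := himage ▸ Finset.mem_image_of_mem c (Finset.mem_univ w)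
  have hfw : f ≠ β w := fun h => hfβ (h ▸ Finset.mem_image_of_mem β (Finset.mem_univ w))
  simp [cliqueCost, hw, hfw, hfβ, hwβ]

theorem Recolors.top (hℓ : Fintype.card W < ℓ) {c β : W → Fin ℓ} (hc : Injective c)
    (hβ : Injective β) : Recolors ⊤ ℓ c β fun _ => 2 :=
  (top_cliqueCost hℓ hc hβ).mono fun w => by dsimp only [cliqueCost]; split_ifs <;> omega

end Complete

structure CliqueRetraction {V : Type*} (G : SimpleGraph V) where
  Q : Finset V
  isClique : G.IsClique (Q : Set V)
  r : V → V
  r_mem : ∀ x, r x ∈ Q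
  r_of_mem : ∀ x ∈ Q, r x = x
  r_ne_of_adj : ∀ ⦃x y⦄, G.Adj x y → r x ≠ r y

namespace CliqueRetraction

variable {V : Type*} {G : SimpleGraph V} (R : CliqueRetraction G) {ℓ : ℕ} {φ : V → Fin ℓ}

def toColoring : G.Coloring R.Q :=
  Coloring.mk (fun x => ⟨R.r x, R.r_mem x⟩) fun hxy h => R.r_ne_of_adj hxy (congrArg Subtype.val h)

theorem chromaticNumber_eq : G.chromaticNumber = R.Q.card :=
  le_antisymm (by simpa using R.toColoring.colorable.chromaticNumber_le)
    R.isClique.card_le_chromaticNumber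

theorem injective_restrict (hφ : IsProperColoring G ℓ φ) : Injective fun q : R.Q => φ q :=
  fun q q' he => Subtype.ext <| by_contra fun hne => hφ (R.isClique q.2 q'.2 hne) he

theorem comp_r_ne (hφ : IsProperColoring G ℓ φ) {x y : V} (hxy : G.Adj x y) :
    φ (R.r x) ≠ φ (R.r y) :=
  hφ (R.isClique (R.r_mem x) (R.r_mem y) (R.r_ne_of_adj hxy))

theorem recolors_comp_r [Fintype V] [DecidableEq V] (hℓ : R.Q.card < ℓ) {ψ : V → Fin ℓ}
    (hφ : IsProperColoring G ℓ φ) (hψ : IsProperColoring G ℓ ψ) :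
    Recolors G ℓ (φ ∘ R.r) (ψ ∘ R.r) fun _ => 2 :=
  (Recolors.top (by simpa using hℓ) (R.injective_restrict hφ) (R.injective_restrict hψ)).comap
    R.toColoring

variable [DecidableEq V] {T : Finset V}

theorem piecewise_comp_r_apply {z : V} (hz : z ∈ T ∨ z ∈ R.Q) :
    T.piecewise (φ ∘ R.r) φ z = φ (R.r z) := by
  rcases hz with hz | hz
  · exact T.piecewise_eq_of_mem _ _ hz
  · by_cases hzT : z ∈ T
    · exact T.piecewise_eq_of_mem _ _ hzT
    · rw [T.piecewise_eq_of_notMem _ _ hzT, R.r_of_mem z hz]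

theorem piecewise_comp_r (hT : ∀ z, z ∈ T ∨ z ∈ R.Q) : T.piecewise (φ ∘ R.r) φ = φ ∘ R.r :=
  funext fun z => R.piecewise_comp_r_apply (hT z)

theorem recolors_piecewise_insert (hφ : IsProperColoring G ℓ φ)
    (hT : IsProperColoring G ℓ (T.piecewise (φ ∘ R.r) φ)) {x : V}
    (hx : ∀ z, G.Adj x z → z ∈ T ∨ z ∈ R.Q) :
    Recolors G ℓ (T.piecewise (φ ∘ R.r) φ) ((insert x T).piecewise (φ ∘ R.r) φ)
      fun a => if a = x then 1 else 0 := by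
  rw [Finset.piecewise_insert]
  exact Recolors.single hT fun z hz => by
    rw [R.piecewise_comp_r_apply (hx z hz)]
    exact (R.comp_r_ne hφ hz).symm

theorem recolors_piecewise_insert_insert (hℓ : R.Q.card < ℓ) (hφ : IsProperColoring G ℓ φ)
    (hT : IsProperColoring G ℓ (T.piecewise (φ ∘ R.r) φ)) {x y : V} (hxy : G.Adj x y)
    (hx : ∀ z, G.Adj x z → z ≠ y → z ∈ T ∨ z ∈ R.Q)
    (hy : ∀ z, G.Adj y z → z ≠ x → z ∈ T ∨ z ∈ R.Q ∨ G.Adj z (R.r y)) :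
    Recolors G ℓ (T.piecewise (φ ∘ R.r) φ) ((insert x (insert y T)).piecewise (φ ∘ R.r) φ)
      fun a => if a = x ∨ a = y then 2 else 0 := by
  obtain ⟨f, -, hf⟩ := Finset.exists_mem_notMem_of_card_lt_card (s := R.Q.image φ)
    (t := Finset.univ) (by simpa using Finset.card_image_le.trans_lt hℓ)
  have hfQ : ∀ q ∈ R.Q, f ≠ φ q := fun q hq he => hf (he ▸ Finset.mem_image_of_mem φ hq)
  rw [Finset.piecewise_insert, Finset.piecewise_insert, ← update_comm hxy.ne]
  refine Recolors.edge hT hxy (R.comp_r_ne hφ hxy) (hfQ _ (R.r_mem x)) (hfQ _ (R.r_mem y))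
    (fun z hz hzy => ?_) fun z hz hzx => ?_
  · rw [R.piecewise_comp_r_apply (hx z hz hzy)]
    exact ⟨(R.comp_r_ne hφ hz).symm, (hfQ _ (R.r_mem z)).symm⟩
  · by_cases hzT : z ∈ T ∨ z ∈ R.Q
    · rw [R.piecewise_comp_r_apply hzT]
      exact (R.comp_r_ne hφ hz).symm
    · push Not at hzT
      rw [T.piecewise_eq_of_notMem _ _ hzT.1]
      exact hφ (((hy z hz hzx).resolve_left hzT.1).resolve_left hzT.2)

end CliqueRetraction

namespace H5Data

variable {V : Type*} {G : SimpleGraph V} (h : H5Data G)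

theorem ne_v_of_mem_S1 {x : V} (hx : x ∈ h.S1) (i : Fin 6) : x ≠ h.v i :=
  fun he => (h.notin i).1 (he ▸ hx)

theorem ne_v_of_mem_S2 {x : V} (hx : x ∈ h.S2) (i : Fin 6) : x ≠ h.v i :=
  fun he => (h.notin i).2 (he ▸ hx)

theorem ne_of_mem_S1_of_mem_S2 {x y : V} (hx : x ∈ h.S1) (hy : y ∈ h.S2) : x ≠ y :=
  fun he => Finset.disjoint_left.1 h.d12 hx (he ▸ hy)

theorem adj_v5 {x : V} (hx : x ∈ h.S1 ∨ x ∈ h.S2) : G.Adj (h.v 5) x := by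
  refine (h.adj_iff _ _).2 ⟨fun he => ?_, by tauto⟩
  have := h.notin 5
  rw [he] at this
  tauto

theorem adj_v_succ (i : Fin 6) : G.Adj (h.v i) (h.v (i + 1)) :=
  (h.adj_iff _ _).2 ⟨h.inj.ne (by fin_cases i <;> decide), .inl ⟨i, i + 1, rfl, rfl, .inl rfl⟩⟩

/-- Two vertices of each clique, whose colors the cycle vertices `v 0, v 1, v 3, v 4` copy. -/
structure Anchors where
  a₁ : V
  a₂ : V
  b₁ : V
  b₂ : V
  a₁_mem : a₁ ∈ h.S1
  a₂_mem : a₂ ∈ h.S1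
  b₁_mem : b₁ ∈ h.S2
  b₂_mem : b₂ ∈ h.S2
  a_ne : a₁ ≠ a₂
  b_ne : b₁ ≠ b₂

theorem nonempty_anchors (h1 : 2 ≤ h.S1.card) (h2 : 2 ≤ h.S2.card) : Nonempty h.Anchors := by
  obtain ⟨a₁, ha₁, a₂, ha₂, ha⟩ := Finset.one_lt_card.1 h1
  obtain ⟨b₁, hb₁, b₂, hb₂, hb⟩ := Finset.one_lt_card.1 h2
  exact ⟨⟨a₁, a₂, b₁, b₂, ha₁, ha₂, hb₁, hb₂, ha, hb⟩⟩

namespace Anchors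

variable {h} (A : h.Anchors)

noncomputable def host : V → V := extend h.v ![A.b₁, A.b₂, h.v 2, A.a₁, A.a₂, h.v 2] id

theorem host_v (i : Fin 6) : A.host (h.v i) = ![A.b₁, A.b₂, h.v 2, A.a₁, A.a₂, h.v 2] i :=
  h.inj.extend_apply _ _ i

theorem host_of_mem_S {x : V} (hx : x ∈ h.S1 ∨ x ∈ h.S2) : A.host x = x :=
  extend_apply' _ _ x fun ⟨i, hi⟩ => by have := h.notin i; rw [hi] at this; tauto

theorem host_ne_of_adj {x y : V} (hxy : G.Adj x y) : A.host x ≠ A.host y := by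
  have := A.a_ne; have := A.b_ne
  have := h.ne_v_of_mem_S1 A.a₁_mem 2; have := h.ne_v_of_mem_S1 A.a₂_mem 2
  have := h.ne_v_of_mem_S2 A.b₁_mem 2; have := h.ne_v_of_mem_S2 A.b₂_mem 2
  obtain ⟨hne, ⟨i, j, rfl, rfl, hij⟩ | ⟨hx, hy⟩ | ⟨hx, hy⟩ | ⟨hx, hy⟩ | ⟨hx, hy⟩ | ⟨hs, hv⟩ |
    ⟨hs, hv⟩ | ⟨hs, hv⟩ | ⟨hs, hv⟩⟩ := (h.adj_iff x y).1 hxy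
  · rw [A.host_v, A.host_v]
    fin_cases i <;> fin_cases j <;> simp_all [c6adj, eq_comm]
  · rw [A.host_of_mem_S (.inl hx), A.host_of_mem_S (.inl hy)]; exact hne
  · rw [A.host_of_mem_S (.inr hx), A.host_of_mem_S (.inr hy)]; exact hne
  · rw [A.host_of_mem_S (.inl hx), A.host_of_mem_S (.inr hy)]; exact hne
  · rw [A.host_of_mem_S (.inr hx), A.host_of_mem_S (.inl hy)]; exact hne
  all_goals
    first
    | rw [A.host_of_mem_S (.inl hs)]
      have := h.ne_of_mem_S1_of_mem_S2 hs A.b₁_mem; have := h.ne_of_mem_S1_of_mem_S2 hs A.b₂_mem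
      have := h.ne_v_of_mem_S1 hs 2
    | rw [A.host_of_mem_S (.inr hs)]
      have := h.ne_of_mem_S1_of_mem_S2 A.a₁_mem hs; have := h.ne_of_mem_S1_of_mem_S2 A.a₂_mem hs
      have := h.ne_v_of_mem_S2 hs 2
    rcases hv with rfl | rfl | rfl | rfl <;> simp_all [A.host_v, eq_comm]

end Anchors

variable [DecidableEq V]

def Q : Finset V := insert (h.v 2) (h.S1 ∪ h.S2)

theorem mem_Q {x : V} : x ∈ h.Q ↔ x = h.v 2 ∨ x ∈ h.S1 ∨ x ∈ h.S2 := by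
  simp [Q]

theorem card_Q : h.Q.card = h.S1.card + h.S2.card + 1 := by
  rw [Q, Finset.card_insert_of_notMem, Finset.card_union_of_disjoint h.d12]
  simpa using h.notin 2

theorem isClique_Q : G.IsClique (h.Q : Set V) := by
  intro x hx y hy hxy
  rw [Finset.mem_coe, mem_Q] at hx hy
  refine (h.adj_iff x y).2 ⟨hxy, ?_⟩
  rcases hx with rfl | hx | hx <;> rcases hy with rfl | hy | hy <;> simp_all

theorem adj_v_cases {i : Fin 6} {z : V} (hz : G.Adj (h.v i) z) :
    z ∈ h.Q ∨ z = h.v (i + 1) ∨ z = h.v (i - 1) := by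
  rw [h.mem_Q]
  obtain ⟨-, ⟨i', j, hi', rfl, hij⟩ | hz⟩ := (h.adj_iff _ _).1 hz
  · obtain rfl := h.inj hi'
    rcases hij with rfl | rfl
    · exact Or.inr (Or.inl rfl)
    · exact Or.inr (Or.inr (by simp))
  · have := h.notin i
    tauto

namespace Anchors

variable {h} (A : h.Anchors)

theorem host_of_mem_Q {x : V} (hx : x ∈ h.Q) : A.host x = x := by
  rcases h.mem_Q.1 hx with rfl | hx
  · exact A.host_v 2
  · exact A.host_of_mem_S hx

theorem host_mem_Q (x : V) : A.host x ∈ h.Q := by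
  rcases h.cover x with hx | ⟨i, rfl⟩
  · rw [A.host_of_mem_S hx, h.mem_Q]
    tauto
  · rw [A.host_v, h.mem_Q]
    have := A.a₁_mem; have := A.a₂_mem; have := A.b₁_mem; have := A.b₂_mem
    fin_cases i <;> simp_all

noncomputable def retraction : CliqueRetraction G where
  Q := h.Q
  isClique := h.isClique_Q
  r := A.host
  r_mem := A.host_mem_Q
  r_of_mem _ := A.host_of_mem_Q
  r_ne_of_adj _ _ := A.host_ne_of_adj

theorem recolors_comp_host {ℓ : ℕ} (hℓ : h.Q.card < ℓ) {φ : V → Fin ℓ}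
    (hφ : IsProperColoring G ℓ φ) : Recolors G ℓ φ (φ ∘ A.host) fun _ => 2 := by
  let R := A.retraction
  have v2_mem : h.v 2 ∈ R.Q := h.mem_Q.2 (.inl rfl)
  have h₁ := R.recolors_piecewise_insert_insert (T := ∅) hℓ hφ (by rwa [Finset.piecewise_empty])
    (h.adj_v_succ 3)
    (fun z hz hzy => by
      rcases h.adj_v_cases hz with hzQ | rfl | rfl
      exacts [.inr hzQ, absurd rfl hzy, .inr v2_mem])
    (fun z hz hzx => by
      rcases h.adj_v_cases hz with hzQ | rfl | rfl
      · exact .inr (.inl hzQ)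
      · rw [show R.r (h.v (3 + 1)) = A.a₂ from A.host_v 4]
        exact .inr (.inr (h.adj_v5 (.inl A.a₂_mem)))
      · exact absurd rfl hzx)
  have h₂ := R.recolors_piecewise_insert_insert hℓ hφ h₁.proper_right (h.adj_v_succ 0).symm
    (fun z hz hzy => by
      rcases h.adj_v_cases hz with hzQ | rfl | rfl
      exacts [.inr hzQ, .inr v2_mem, absurd rfl hzy])
    (fun z hz hzx => by
      rcases h.adj_v_cases hz with hzQ | rfl | rfl
      · exact .inr (.inl hzQ)
      · exact absurd rfl hzx
      · rw [show R.r (h.v 0) = A.b₁ from A.host_v 0]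
        exact .inr (.inr (h.adj_v5 (.inr A.b₁_mem))))
  have h₃ := R.recolors_piecewise_insert hφ h₂.proper_right (x := h.v 5) fun z hz => by
    rcases h.adj_v_cases hz with hzQ | rfl | rfl
    exacts [.inr hzQ, .inl (by simp), .inl (by simp)]
  rw [Finset.piecewise_empty] at h₁
  rw [R.piecewise_comp_r (T := insert (h.v 5) _) fun z => ?_] at h₃
  · refine ((h₁.trans h₂).trans h₃).mono fun a => ?_
    by_cases ha : ∃ i, a = h.v i
    · obtain ⟨i, rfl⟩ := ha
      fin_cases i <;> simp [h.inj.eq_iff]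
    · push Not at ha
      simp [ha]
  · rcases h.cover z with hz | ⟨i, rfl⟩
    · exact .inr (h.mem_Q.2 (.inr hz))
    · fin_cases i <;> simp [R, retraction, h.mem_Q]

end Anchors

end H5Data

/-- for `G ∈ H₅` with `|S₁| ≥ 2` and `|S₂| ≥ 2`, `χ(G) = |S₁| + |S₂| + 1`,
and for every `ℓ > χ(G)` any two `ℓ`-colorings of `G` are joined by a path in `R_ℓ(G)`
recoloring each vertex at most 6 times. -/
theorem stmt17 {V : Type*} [Fintype V] {G : SimpleGraph V} (h : H5Data G)
    (h1 : 2 ≤ h.S1.card) (h2 : 2 ≤ h.S2.card) :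
    G.chromaticNumber = ((h.S1.card + h.S2.card + 1 : ℕ) : ℕ∞) ∧
    ∀ ℓ : ℕ, G.chromaticNumber < (ℓ : ℕ∞) →
      ∀ φ ψ : V → Fin ℓ, IsProperColoring G ℓ φ → IsProperColoring G ℓ ψ →
        ∃ m c, IsRecolorSeq G ℓ m c ∧ c 0 = φ ∧ c m = ψ ∧
          ∀ a : V, recolorCount m c a ≤ 6 := by
  classical
  obtain ⟨A⟩ := h.nonempty_anchors h1 h2
  have hχ : G.chromaticNumber = h.Q.card := A.retraction.chromaticNumber_eq
  rw [h.card_Q] at hχ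
  refine ⟨hχ, fun ℓ hℓ φ ψ hφ hψ => ?_⟩
  have hQ : h.Q.card < ℓ := by
    rw [h.card_Q]
    exact_mod_cast hχ ▸ hℓ
  exact (((A.recolors_comp_host hQ hφ).trans (A.retraction.recolors_comp_r hQ hφ hψ)).trans
    (A.recolors_comp_host hQ hψ).symm).mono fun _ => le_rfl
end
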